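/- arXiv:2410.12003 — 7 statements merged into one kernel-verified Lean document; each statement's English description precedes it below -/
import Mathlib

section
/- Let G be a directed graph with positive real edge weights, and let d denote shortest-path distance. Suppose vertices v_1, v_2, t_{12}, t_{2p} and reals r_{12}, r_{2p}, δ_{y_1}, δ_{y_2} satisfy: d(t_{12}, v_1) ≤ r_{12} + δ_{y_1}, d(t_{12}, v_2) > r_{12} + δ_{y_2}, d(t_{2p}, v_2) ≤ r_{2p} + δ_{y_2}, and d(t_{2p}, v_1) > r_{2p} + δ_{y_1}. Then no vertex x lies simultaneously on a shortest path from t_{12} to v_1 and on a shortest path from t_{2p} to v_2. -/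
/-- Claim 2 of the pseudodimension minor-building argument: in a directed graph
with positive real edge weights, with `d` the shortest-path distance (hence
nonnegative and satisfying the triangle inequality), the four ball conditions
force the shortest paths `t₁₂ → v₁` and `t₂ₚ → v₂` to be vertex disjoint.
A vertex `x` lies on a shortest path from `s` to `t` iff `d s x + d x t = d s t`. -/
theorem stmt_0 {V : Type*} (d : V → V → ℝ)
    (hnonneg : ∀ a b, 0 ≤ d a b)
    (htri : ∀ a b c, d a c ≤ d a b + d b c)
    (v1 v2 t12 t2p : V) (r12 r2p δy1 δy2 : ℝ)
    (h1 : d t12 v1 ≤ r12 + δy1)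
    (h2 : r12 + δy2 < d t12 v2)
    (h3 : d t2p v2 ≤ r2p + δy2)
    (h4 : r2p + δy1 < d t2p v1) :
    ¬ ∃ x : V, (d t12 x + d x v1 = d t12 v1) ∧ (d t2p x + d x v2 = d t2p v2) := by
  rintro ⟨x, hx1, hx2⟩
  have a := htri t12 x v2
  have b := htri t2p x v1
  linarith
end

section
/- Let G be a weighted digraph whose edge weights are among distinct values w_1 < w_2 < ... < w_m, and let G' be the graph with the same edges where edge e gets weight n^j if exactly j edge weights of G are ≤ w(e). Then for every vertex s and every edge e with j edges of weight at most w(e), the bottleneck ball {v : β_G(s,v) ≤ w(e)} equals the ordinary distance ball {v : d_{G'}(s,v) ≤ n^{j+1} − 1}, where n = |V| ≥ 2 and only simple paths are considered. -/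
open scoped Classical

/-- A simple path from `u` to `v` in the digraph with adjacency relation `A`. -/
def IsSPath {V : Type*} (A : V → V → Prop) (u v : V) (l : List V) : Prop :=
  l.Chain' A ∧ l.head? = some u ∧ l.getLast? = some v ∧ l.Nodup

/-- The (ordinary, additive) weight of a path. -/
def pathWeight {V : Type*} (w : V → V → ℝ) (l : List V) : ℝ :=
  ((l.zip l.tail).map fun p => w p.1 p.2).sum

/-- The bottleneck length of a path: the maximum edge weight on it. -/
def pathBottleneck {V : Type*} (w : V → V → ℝ) (l : List V) : ℝ :=
  ((l.zip l.tail).map fun p => w p.1 p.2).foldr max 0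


/-!
Rank every edge by the number `r` of edges whose weight is at most its own, and give it the
new weight `n ^ r`, where `n = |V|`. A simple path has at most `n - 1` edges, so if all its
ranks are at most `j` its new length is at most `(n - 1) n ^ j < n ^ (j + 1)`, while a single
edge of rank `> j` already costs `n ^ (j + 1)`: the new length is at most `n ^ (j + 1) - 1`
exactly when every edge on the path has rank at most `j`. And an edge has rank at most that of
`e` exactly when its weight is at most `w e`, which is the bottleneck condition.
-/

open Finset

theorem List.IsChain.rel_of_mem_zip_tail {α : Type*} {R : α → α → Prop} :
    ∀ {l : List α}, l.IsChain R → ∀ p ∈ l.zip l.tail, R p.1 p.2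
  | [], _, _, hp => by simp at hp
  | [_], _, _, hp => by simp at hp
  | _ :: _ :: _, h, p, hp => by
    rw [List.isChain_cons_cons] at h
    rw [List.tail_cons, List.zip_cons_cons, List.mem_cons] at hp
    rcases hp with rfl | hp
    · exact h.1
    · exact h.2.rel_of_mem_zip_tail p hp

theorem List.foldr_max_le_iff {α : Type*} [LinearOrder α] {l : List α} {b c : α} :
    l.foldr max b ≤ c ↔ b ≤ c ∧ ∀ x ∈ l, x ≤ c := by
  induction l with
  | nil => simp
  | cons a l ih => simp [ih, and_left_comm]

theorem sum_map_pow_le_pow_succ_sub_one_iff {n j : ℕ} {rs : List ℕ} (hlen : rs.length < n) :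
    (rs.map ((n : ℝ) ^ ·)).sum ≤ (n : ℝ) ^ (j + 1) - 1 ↔ ∀ r ∈ rs, r ≤ j := by
  have hn : (1 : ℝ) ≤ n := by exact_mod_cast Nat.zero_lt_of_lt hlen
  constructor
  · intro hsum r hr
    by_contra! hjr
    have hbig : (n : ℝ) ^ (j + 1) ≤ n ^ r := pow_le_pow_right₀ hn hjr
    have hle : (n : ℝ) ^ r ≤ (rs.map ((n : ℝ) ^ ·)).sum :=
      List.single_le_sum (by simp) _ (List.mem_map_of_mem hr)
    linarith
  · intro hrs
    have hlen' : (rs.length : ℝ) ≤ n - 1 := by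
      have : (rs.length : ℝ) + 1 ≤ n := by exact_mod_cast hlen
      linarith
    calc (rs.map ((n : ℝ) ^ ·)).sum ≤ (rs.map ((n : ℝ) ^ ·)).length • (n : ℝ) ^ j :=
          List.sum_le_card_nsmul _ _ (List.forall_mem_map.2 fun r hr => pow_le_pow_right₀ hn (hrs r hr))
      _ ≤ (n - 1) * (n : ℝ) ^ j := by rw [List.length_map, nsmul_eq_mul]; gcongr
      _ = n ^ (j + 1) - n ^ j := by ring
      _ ≤ n ^ (j + 1) - 1 := by linarith [one_le_pow₀ (n := j) hn]

section EdgeRank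

variable {V : Type*} (E : Finset (V × V)) (w : V → V → ℝ)

noncomputable def edgeRank (x : ℝ) : ℕ :=
  (E.filter fun e => w e.1 e.2 ≤ x).card

theorem edgeRank_mono : Monotone (edgeRank E w) := fun _ _ hxy =>
  card_le_card fun _ he => by
    rw [mem_filter] at he ⊢
    exact ⟨he.1, he.2.trans hxy⟩

variable {E w}

theorem edgeRank_lt_edgeRank {p : V × V} (hp : p ∈ E) {x : ℝ} (hx : x < w p.1 p.2) :
    edgeRank E w x < edgeRank E w (w p.1 p.2) := by
  refine card_lt_card ((ssubset_iff_of_subset fun q hq => ?_).2 ⟨p, ?_, fun hp' => ?_⟩)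
  · rw [mem_filter] at hq ⊢
    exact ⟨hq.1, hq.2.trans hx.le⟩
  · exact mem_filter.2 ⟨hp, le_rfl⟩
  · exact (mem_filter.1 hp').2.not_gt hx

theorem edgeRank_le_edgeRank_iff {p : V × V} (hp : p ∈ E) {x : ℝ} :
    edgeRank E w (w p.1 p.2) ≤ edgeRank E w x ↔ w p.1 p.2 ≤ x :=
  ⟨fun h => not_lt.1 fun hx => (edgeRank_lt_edgeRank hp hx).not_ge h,
    fun h => edgeRank_mono E w h⟩

end EdgeRank

section Paths

variable {V : Type*} {A : V → V → Prop} {u v : V} {l : List V}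

theorem IsSPath.length_zip_tail_lt [Fintype V] (hl : IsSPath A u v l) :
    (l.zip l.tail).length < Fintype.card V := by
  have hne : l ≠ [] := by
    rintro rfl
    simp [IsSPath] at hl
  have hcard := hl.2.2.2.length_le_card
  have hpos := List.length_pos_of_ne_nil hne
  rw [List.length_zip, List.length_tail]
  omega

theorem pathBottleneck_le_iff (w : V → V → ℝ) {c : ℝ} (hc : 0 ≤ c) :
    pathBottleneck w l ≤ c ↔ ∀ p ∈ l.zip l.tail, w p.1 p.2 ≤ c := by
  rw [pathBottleneck, List.foldr_max_le_iff, List.forall_mem_map]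
  exact and_iff_right hc

theorem pathBottleneck_le_iff_pathWeight_le [Fintype V] {E : Finset (V × V)} {w w' : V → V → ℝ}
    (hw' : ∀ e ∈ E, w' e.1 e.2 = (Fintype.card V : ℝ) ^ edgeRank E w (w e.1 e.2))
    {x : ℝ} (hx : 0 ≤ x) (hl : IsSPath (fun a b => (a, b) ∈ E) u v l) :
    pathBottleneck w l ≤ x ↔
      pathWeight w' l ≤ (Fintype.card V : ℝ) ^ (edgeRank E w x + 1) - 1 := by
  have hE : ∀ p ∈ l.zip l.tail, p ∈ E := hl.1.rel_of_mem_zip_tail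
  have hweight : pathWeight w' l =
      (((l.zip l.tail).map fun p => edgeRank E w (w p.1 p.2)).map
        ((Fintype.card V : ℝ) ^ ·)).sum := by
    rw [pathWeight, List.map_map]
    exact congrArg List.sum (List.map_congr_left fun p hp => hw' p (hE p hp))
  rw [pathBottleneck_le_iff w hx, hweight,
    sum_map_pow_le_pow_succ_sub_one_iff (by simpa using hl.length_zip_tail_lt), List.forall_mem_map]
  exact forall₂_congr fun p hp => (edgeRank_le_edgeRank_iff (hE p hp)).symm

end Paths

theorem stmt_2_general {V : Type*} [Fintype V]
    (E : Finset (V × V)) (w : V → V → ℝ)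
    (hw : ∀ p ∈ E, 0 ≤ w p.1 p.2)
    (s : V) (e : V × V) (he : e ∈ E)
    (j : ℕ) (hj : j = (E.filter fun e' => w e'.1 e'.2 ≤ w e.1 e.2).card)
    (w' : V → V → ℝ)
    (hw' : ∀ e' ∈ E, w' e'.1 e'.2 =
      (Fintype.card V : ℝ) ^ (E.filter fun e'' => w e''.1 e''.2 ≤ w e'.1 e'.2).card) :
    {v | ∃ l, IsSPath (fun a b => (a, b) ∈ E) s v l ∧ pathBottleneck w l ≤ w e.1 e.2} =
      {v | ∃ l, IsSPath (fun a b => (a, b) ∈ E) s v l ∧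
        pathWeight w' l ≤ (Fintype.card V : ℝ) ^ (j + 1) - 1} := by
  subst hj
  ext v
  exact exists_congr fun l => and_congr_right fun hl =>
    pathBottleneck_le_iff_pathWeight_le hw' (hw e he) hl

/-- Reweighting a digraph `G = (V, E, w)` (with `n = |V| ≥ 2`) so that an edge `e'`
gets weight `n ^ j'` in `G'`, where `j'` is the number of edges of weight at most
`w(e')`: then for every vertex `s` and edge `e` with `j` edges of weight at most
`w(e)`, the bottleneck ball `{v : β_G(s,v) ≤ w(e)}` equals the ordinary distance
ball `{v : d_{G'}(s,v) ≤ n^(j+1) − 1}`, both taken over simple paths. -/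
theorem stmt_2 {V : Type*} [Fintype V] [DecidableEq V]
    (E : Finset (V × V)) (w : V → V → ℝ)
    (hw : ∀ p ∈ E, 0 ≤ w p.1 p.2)
    (hn : 2 ≤ Fintype.card V)
    (s : V) (e : V × V) (he : e ∈ E)
    (j : ℕ) (hj : j = (E.filter fun e' => w e'.1 e'.2 ≤ w e.1 e.2).card)
    (w' : V → V → ℝ)
    (hw' : ∀ e' ∈ E, w' e'.1 e'.2 =
      (Fintype.card V : ℝ) ^ (E.filter fun e'' => w e''.1 e''.2 ≤ w e'.1 e'.2).card) :
    {v | ∃ l, IsSPath (fun a b => (a, b) ∈ E) s v l ∧ pathBottleneck w l ≤ w e.1 e.2} =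
      {v | ∃ l, IsSPath (fun a b => (a, b) ∈ E) s v l ∧
        pathWeight w' l ≤ (Fintype.card V : ℝ) ^ (j + 1) - 1} :=
  stmt_2_general E w hw s e he j hj w' hw'
end

section
/- If G is a K_h-minor-free directed graph, then the set system of directed balls B_G = {B(v,r) : v ∈ V, r ∈ ℝ}, where B(v,r) = {u : d(v,u) ≤ r}, has VC dimension at most h − 1. -/
/-- Shortest-path distance in a weighted digraph, valued in `EReal`
(`⊤` when `v` is unreachable from `u`). -/
noncomputable def ddist {V : Type*} (A : V → V → Prop) (w : V → V → ℝ) (u v : V) : EReal :=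
  sInf {x : EReal | ∃ l, IsSPath A u v l ∧ x = (pathWeight w l : ℝ)}

/-- `G` contains `K_d` as a minor. -/
def HasCompleteMinor {V : Type*} (G : SimpleGraph V) (d : ℕ) : Prop :=
  ∃ B : Fin d → Set V,
    (∀ i, (B i).Nonempty) ∧
    (∀ i, (G.induce (B i)).Connected) ∧
    (∀ i j, i ≠ j → Disjoint (B i) (B j)) ∧
    (∀ i j, i ≠ j → ∃ a ∈ B i, ∃ b ∈ B j, G.Adj a b)

/-- A set system `F` (VC-)shatters `A` if every subset of `A` is `A ∩ S`, `S ∈ F`. -/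
def VCShatters {α : Type*} (F : Set (Set α)) (A : Set α) : Prop :=
  ∀ B ⊆ A, ∃ S ∈ F, A ∩ S = B

/-- VC dimension of a set system. -/
noncomputable def VCdim {α : Type*} (F : Set (Set α)) : ℕ :=
  sSup {d | ∃ A : Finset α, A.card = d ∧ VCShatters F ↑A}

/-!
If balls shatter the sites `x₁, …, xₙ`, the Voronoi cells of the sites (distances measured towards
the sites, ties broken by index) are the branch sets of a `Kₙ` minor. A cell contains every shortest
path from its vertices to its site, hence is connected. For `i ≠ j` take a ball `B(c, r)` containing
exactly `xᵢ` and `xⱼ` among the sites: every vertex of a shortest path from `c` to `xᵢ` or `xⱼ` is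
strictly closer to that site than to all sites other than `xᵢ, xⱼ`, so both paths stay inside
`cell i ∪ cell j`. Whichever of the two cells contains `c`, the path towards the other site must
cross an edge between them.
-/

open Function

section

variable {V : Type*} {A : V → V → Prop} {w : V → V → ℝ}

@[simp] lemma pathWeight_singleton (a : V) : pathWeight w [a] = 0 := rfl

@[simp] lemma pathWeight_cons_cons (a b : V) (l : List V) :
    pathWeight w (a :: b :: l) = w a b + pathWeight w (b :: l) := rfl

lemma pathWeight_append_cons (l₁ l₂ : List V) (z : V) :
    pathWeight w (l₁ ++ z :: l₂) = pathWeight w (l₁ ++ [z]) + pathWeight w (z :: l₂) := by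
  induction l₁ with
  | nil => simp
  | cons a t ih =>
    cases t with
    | nil => simp
    | cons b t =>
      simp only [List.cons_append, pathWeight_cons_cons] at ih ⊢
      rw [ih, add_assoc]

lemma pathWeight_nonneg (hw : ∀ a b, A a b → 0 ≤ w a b) :
    ∀ {l : List V}, l.IsChain A → 0 ≤ pathWeight w l
  | [], _ | [_], _ => le_rfl
  | a :: b :: t, hc => by
    rw [List.isChain_cons_cons] at hc
    rw [pathWeight_cons_cons]
    exact add_nonneg (hw a b hc.1) (pathWeight_nonneg hw hc.2)

namespace IsSPath

variable {u v z : V} {l₁ l₂ : List V}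

lemma singleton (v : V) : IsSPath A v v [v] :=
  ⟨List.IsChain.singleton v, rfl, rfl, List.nodup_singleton v⟩

lemma dropUntil (h : IsSPath A u v (l₁ ++ z :: l₂)) : IsSPath A z v (z :: l₂) :=
  ⟨(h.1 : List.IsChain A _).right_of_append, rfl,
    by rw [← h.2.2.1, List.getLast?_append_cons],
    h.2.2.2.sublist (List.sublist_append_right _ _)⟩

lemma takeUntil (h : IsSPath A u v (l₁ ++ z :: l₂)) : IsSPath A u z (l₁ ++ [z]) :=
  ⟨(h.1 : List.IsChain A _).prefix ⟨l₂, by simp⟩, by cases l₁ <;> simpa using h.2.1,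
    by simp, h.2.2.2.sublist (by simp)⟩

end IsSPath

lemma exists_isSPath_of_isChain (hw : ∀ a b, A a b → 0 ≤ w a b) :
    ∀ {l : List V} {u v : V}, l.IsChain A → l.head? = some u → l.getLast? = some v →
      ∃ l', IsSPath A u v l' ∧ pathWeight w l' ≤ pathWeight w l ∧ l' ⊆ l
  | [], _, _, _, hu, _ => by simp at hu
  | [a], u, v, _, hu, hv => by
    obtain rfl : a = u := by simpa using hu
    obtain rfl : a = v := by simpa using hv
    exact ⟨[a], .singleton a, le_rfl, List.Subset.refl _⟩
  | a :: b :: t, u, v, hc, hu, hv => by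
    obtain rfl : a = u := by simpa using hu
    rw [List.isChain_cons_cons] at hc
    obtain ⟨l', hl', hwt, hsub⟩ := exists_isSPath_of_isChain hw hc.2 rfl (by simpa using hv)
    have hstep : pathWeight w l' ≤ pathWeight w (a :: b :: t) := by
      rw [pathWeight_cons_cons]; linarith [hw a b hc.1]
    by_cases ha : a ∈ l'
    · -- cut the loop through `a`
      obtain ⟨l₁, l₂, rfl⟩ := List.append_of_mem ha
      refine ⟨a :: l₂, hl'.dropUntil, ?_, List.cons_subset_cons _ fun y hy => ?_⟩
      · rw [pathWeight_append_cons] at hstep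
        linarith [pathWeight_nonneg hw hl'.takeUntil.1]
      · exact hsub (List.mem_append_right _ (List.mem_cons_of_mem _ hy))
    · obtain ⟨l'', rfl⟩ : ∃ l'', l' = b :: l'' := by
        match l', hl'.2.1 with
        | c :: l'', hc => exact ⟨l'', by simpa using hc⟩
      refine ⟨a :: b :: l'', ⟨List.IsChain.cons_cons hc.1 hl'.1, rfl, by simpa using hl'.2.2.1,
        List.nodup_cons.2 ⟨ha, hl'.2.2.2⟩⟩, ?_, List.cons_subset_cons _ hsub⟩
      simp only [pathWeight_cons_cons] at hwt ⊢
      linarith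

section DDist

variable {u v z : V} {l : List V}

lemma ddist_le_pathWeight (h : IsSPath A u v l) : ddist A w u v ≤ pathWeight w l :=
  sInf_le ⟨l, h, rfl⟩

lemma ddist_le_pathWeight_of_isChain (hw : ∀ a b, A a b → 0 ≤ w a b) (hl : l.IsChain A)
    (hu : l.head? = some u) (hv : l.getLast? = some v) : ddist A w u v ≤ pathWeight w l := by
  obtain ⟨l', hl', hle, -⟩ := exists_isSPath_of_isChain hw hl hu hv
  exact (ddist_le_pathWeight hl').trans (EReal.coe_le_coe_iff.2 hle)

lemma ddist_nonneg (hw : ∀ a b, A a b → 0 ≤ w a b) (u v : V) : 0 ≤ ddist A w u v :=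
  le_sInf <| by
    rintro _ ⟨l, hl, rfl⟩
    exact EReal.coe_nonneg.2 (pathWeight_nonneg hw hl.1)

lemma ddist_ne_bot (hw : ∀ a b, A a b → 0 ≤ w a b) (u v : V) : ddist A w u v ≠ ⊥ :=
  ((ddist_nonneg hw u v).trans_lt' EReal.bot_lt_zero).ne'

lemma ddist_self (hw : ∀ a b, A a b → 0 ≤ w a b) (v : V) : ddist A w v v = 0 :=
  le_antisymm (by simpa using ddist_le_pathWeight (w := w) (IsSPath.singleton (A := A) v))
    (ddist_nonneg hw v v)

lemma exists_isSPath_pathWeight_eq_ddist [Finite V] (h : ddist A w u v ≠ ⊤) :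
    ∃ l, IsSPath A u v l ∧ (pathWeight w l : EReal) = ddist A w u v := by
  have := Fintype.ofFinite V
  have hfin : {l | IsSPath A u v l}.Finite :=
    (List.finite_length_le V (Fintype.card V)).subset fun l hl => hl.2.2.2.length_le_card
  have hne : {l | IsSPath A u v l}.Nonempty := by
    by_contra hemp
    exact h (sInf_eq_top.2 fun _ ⟨l, hl, _⟩ => (hemp ⟨l, hl⟩).elim)
  obtain ⟨l, hl, hmin⟩ := Set.exists_min_image _ (pathWeight w) hfin hne
  refine ⟨l, hl, le_antisymm (le_sInf ?_) (ddist_le_pathWeight hl)⟩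
  rintro _ ⟨l', hl', rfl⟩
  exact EReal.coe_le_coe_iff.2 (hmin l' hl')

lemma ddist_pos [Finite V] (hw : ∀ a b, A a b → 0 < w a b) (huv : u ≠ v) :
    0 < ddist A w u v := by
  rcases eq_or_ne (ddist A w u v) ⊤ with htop | htop
  · simp [htop]
  obtain ⟨l, ⟨hc, hu, hv, -⟩, hl⟩ := exists_isSPath_pathWeight_eq_ddist htop
  rw [← hl, EReal.coe_pos]
  match l, hc, hu, hv with
  | [], _, hu, _ => simp at hu
  | [a], _, hu, hv => exact absurd ((Option.some.inj hu).symm.trans (Option.some.inj hv)) huv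
  | a :: b :: t, hc, _, _ =>
    replace hc := List.isChain_cons_cons.1 hc
    rw [pathWeight_cons_cons]
    exact add_pos_of_pos_of_nonneg (hw a b hc.1)
      (pathWeight_nonneg (fun a b h => (hw a b h).le) hc.2)

lemma ddist_triangle [Finite V] (hw : ∀ a b, A a b → 0 ≤ w a b) (u v t : V) :
    ddist A w u t ≤ ddist A w u v + ddist A w v t := by
  rcases eq_or_ne (ddist A w u v) ⊤ with h₁ | h₁
  · rw [h₁, EReal.top_add_of_ne_bot (ddist_ne_bot hw v t)]; exact le_top
  rcases eq_or_ne (ddist A w v t) ⊤ with h₂ | h₂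
  · rw [h₂, EReal.add_top_of_ne_bot (ddist_ne_bot hw u v)]; exact le_top
  obtain ⟨l₁, hl₁, e₁⟩ := exists_isSPath_pathWeight_eq_ddist h₁
  obtain ⟨l₂, hl₂, e₂⟩ := exists_isSPath_pathWeight_eq_ddist h₂
  obtain ⟨l₁, rfl⟩ : ∃ l₁', l₁ = l₁' ++ [v] :=
    ⟨l₁.dropLast, (List.dropLast_append_getLast? v hl₁.2.2.1).symm⟩
  obtain ⟨l₂, rfl⟩ : ∃ l₂', l₂ = v :: l₂' := ⟨l₂.tail, List.eq_cons_of_mem_head? hl₂.2.1⟩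
  have hc : (l₁ ++ v :: l₂).IsChain A := by
    simpa using List.IsChain.append_overlap hl₁.1 hl₂.1 (List.cons_ne_nil v [])
  have hu : (l₁ ++ v :: l₂).head? = some u := by simpa using hl₁.2.1
  have ht : (l₁ ++ v :: l₂).getLast? = some t := by
    rw [List.getLast?_append_cons]; exact hl₂.2.2.1
  calc ddist A w u t ≤ pathWeight w (l₁ ++ v :: l₂) := ddist_le_pathWeight_of_isChain hw hc hu ht
    _ = _ := by rw [pathWeight_append_cons, EReal.coe_add, e₁, e₂]

lemma ddist_add_ddist_le_of_mem (h : IsSPath A u v l)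
    (hl : (pathWeight w l : EReal) = ddist A w u v) (hz : z ∈ l) :
    ddist A w u z + ddist A w z v ≤ ddist A w u v := by
  obtain ⟨l₁, l₂, rfl⟩ := List.append_of_mem hz
  rw [← hl, pathWeight_append_cons, EReal.coe_add]
  exact add_le_add (ddist_le_pathWeight h.takeUntil) (ddist_le_pathWeight h.dropUntil)

lemma IsSPath.ddist_to_ne_top (h : IsSPath A u v l) (hz : z ∈ l) : ddist A w u z ≠ ⊤ := by
  obtain ⟨l₁, l₂, rfl⟩ := List.append_of_mem hz
  exact ((ddist_le_pathWeight h.takeUntil).trans_lt (EReal.coe_lt_top _)).ne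

lemma IsSPath.ddist_from_ne_top (h : IsSPath A u v l) (hz : z ∈ l) : ddist A w z v ≠ ⊤ := by
  obtain ⟨l₁, l₂, rfl⟩ := List.append_of_mem hz
  exact ((ddist_le_pathWeight h.dropUntil).trans_lt (EReal.coe_lt_top _)).ne

end DDist
section Chain

variable {l : List V} {u v : V}

lemma reachable_induce_of_isChain {S : Set V} (hl : l.IsChain A) (hS : ∀ z ∈ l, z ∈ S)
    (hu : l.head? = some u) (hv : v ∈ l) :
    ((SimpleGraph.fromRel A).induce S).Reachable
      ⟨u, hS u (List.mem_of_mem_head? hu)⟩ ⟨v, hS v hv⟩ := by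
  obtain ⟨t, rfl⟩ : ∃ t, l = u :: t := ⟨l.tail, List.eq_cons_of_mem_head? hu⟩
  obtain ⟨_, hreach⟩ := (List.IsChain.iff_mem.1 hl).induction
    (fun y => ∃ hy : y ∈ S, ((SimpleGraph.fromRel A).induce S).Reachable
      ⟨u, hS u List.mem_cons_self⟩ ⟨y, hy⟩) _
    (fun a b ⟨_, hb, hab⟩ ⟨ha, hreach⟩ => ⟨hS b hb, by
      by_cases hab' : a = b
      · subst hab'; exact hreach
      · exact hreach.trans (show ((SimpleGraph.fromRel A).induce S).Adj ⟨a, ha⟩ ⟨b, hS b hb⟩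
          from ⟨hab', Or.inl hab⟩).reachable⟩)
    (fun _ => ⟨_, .refl _⟩) v hv
  exact hreach

lemma exists_fromRel_adj_of_isChain {P Q : Set V} (hPQ : Disjoint P Q) (hl : l.IsChain A)
    (hS : ∀ z ∈ l, z ∈ P ∪ Q) (hu : l.head? = some u) (huP : u ∈ P) (hv : v ∈ l) (hvQ : v ∈ Q) :
    ∃ a ∈ P, ∃ b ∈ Q, (SimpleGraph.fromRel A).Adj a b := by
  by_contra! hno
  obtain ⟨t, rfl⟩ : ∃ t, l = u :: t := ⟨l.tail, List.eq_cons_of_mem_head? hu⟩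
  have hP : ∀ z ∈ u :: t, z ∈ P := (List.IsChain.iff_mem.1 hl).induction (· ∈ P) _
    (fun a b ⟨_, hb, hab⟩ ha => (hS b hb).resolve_right fun hbQ =>
      hno a ha b hbQ ⟨hPQ.ne_of_mem ha hbQ, Or.inl hab⟩)
    (fun _ => huP)
  exact hPQ.ne_of_mem (hP v hv) hvQ rfl

end Chain

lemma AddLECancellable.toLex_le_toLex_of_add {α β : Type*} [Add α] [PartialOrder α] [Preorder β]
    {a b c : α} {i j : β} (ha : AddLECancellable a) (h : toLex (a + b, i) ≤ toLex (a + c, j)) :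
    toLex (b, i) ≤ toLex (c, j) := by
  rw [Prod.Lex.toLex_le_toLex'] at h ⊢
  exact ⟨ha h.1, fun hbc => h.2 (congrArg (a + ·) hbc)⟩

section VoronoiCell

variable {ι : Type*} [LinearOrder ι] {x : ι → V} {i j : ι} {y z c : V} {l : List V}

def voronoiCell (A : V → V → Prop) (w : V → V → ℝ) (x : ι → V) (i : ι) : Set V :=
  {y | ddist A w y (x i) ≠ ⊤ ∧
    ∀ k, toLex (ddist A w y (x i), i) ≤ toLex (ddist A w y (x k), k)}

lemma voronoiCell_disjoint (hij : i ≠ j) :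
    Disjoint (voronoiCell A w x i) (voronoiCell A w x j) :=
  Set.disjoint_left.2 fun _ hi hj =>
    hij (congrArg (fun p => (ofLex p).2) (le_antisymm (hi.2 j) (hj.2 i)))

lemma self_mem_voronoiCell [Finite V] (hw : ∀ a b, A a b → 0 < w a b) (hx : Injective x)
    (i : ι) : x i ∈ voronoiCell A w x i := by
  have hself := ddist_self (fun a b h => (hw a b h).le) (x i)
  refine ⟨by simp [hself], fun k => ?_⟩
  rcases eq_or_ne k i with rfl | hk
  · rfl
  · refine (Prod.Lex.toLex_lt_toLex.2 (Or.inl ?_)).le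
    rw [hself]
    exact ddist_pos hw (hx.ne hk.symm)

lemma mem_voronoiCell_of_mem_geodesic [Finite V] (hw : ∀ a b, A a b → 0 ≤ w a b)
    (hy : y ∈ voronoiCell A w x i) (h : IsSPath A y (x i) l)
    (hl : (pathWeight w l : EReal) = ddist A w y (x i)) (hz : z ∈ l) :
    z ∈ voronoiCell A w x i := by
  have hcan : AddLECancellable (ddist A w y z) := by
    lift ddist A w y z to ℝ using ⟨h.ddist_to_ne_top hz, ddist_ne_bot hw y z⟩ with a
    exact EReal.addLECancellable_coe a
  refine ⟨h.ddist_from_ne_top hz, fun k => hcan.toLex_le_toLex_of_add ?_⟩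
  calc toLex (ddist A w y z + ddist A w z (x i), i) ≤ toLex (ddist A w y (x i), i) :=
        Prod.Lex.toLex_mono ⟨ddist_add_ddist_le_of_mem h hl hz, le_rfl⟩
    _ ≤ toLex (ddist A w y (x k), k) := hy.2 k
    _ ≤ toLex (ddist A w y z + ddist A w z (x k), k) :=
        Prod.Lex.toLex_mono ⟨ddist_triangle hw y z (x k), le_rfl⟩

lemma mem_voronoiCell_union [Finite ι] (hi : ddist A w z (x i) ≠ ⊤)
    (hlt : ∀ k, k ≠ i → k ≠ j → ddist A w z (x i) < ddist A w z (x k)) :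
    z ∈ voronoiCell A w x i ∪ voronoiCell A w x j := by
  have : Nonempty ι := ⟨i⟩
  obtain ⟨m, hm⟩ := Finite.exists_min fun k => toLex (ddist A w z (x k), k)
  have hmem : z ∈ voronoiCell A w x m :=
    ⟨ne_top_of_le_ne_top hi (Prod.Lex.monotone_fst _ _ (hm i)), hm⟩
  obtain rfl | rfl : m = i ∨ m = j := by
    by_contra! hne
    exact (hm i).not_gt (Prod.Lex.toLex_lt_toLex.2 (Or.inl (hlt m hne.1 hne.2)))
  exacts [Or.inl hmem, Or.inr hmem]

lemma mem_voronoiCell_union_of_mem_geodesic [Finite V] [Finite ι]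
    (hw : ∀ a b, A a b → 0 ≤ w a b) {r : ℝ}
    (hball : ∀ k, ddist A w c (x k) ≤ r ↔ k = i ∨ k = j) (h : IsSPath A c (x i) l)
    (hl : (pathWeight w l : EReal) = ddist A w c (x i)) (hz : z ∈ l) :
    z ∈ voronoiCell A w x i ∪ voronoiCell A w x j := by
  refine mem_voronoiCell_union (h.ddist_from_ne_top hz) fun k hki hkj => lt_of_not_ge fun hle => ?_
  refine (hball k).not.2 (by tauto) ?_
  calc ddist A w c (x k) ≤ ddist A w c z + ddist A w z (x k) := ddist_triangle hw _ _ _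
    _ ≤ ddist A w c z + ddist A w z (x i) := by gcongr
    _ ≤ ddist A w c (x i) := ddist_add_ddist_le_of_mem h hl hz
    _ ≤ r := (hball i).2 (Or.inl rfl)

lemma voronoiCell_connected [Finite V] (hw : ∀ a b, A a b → 0 ≤ w a b)
    (hxi : x i ∈ voronoiCell A w x i) :
    ((SimpleGraph.fromRel A).induce (voronoiCell A w x i)).Connected := by
  have hreach : ∀ y (hy : y ∈ voronoiCell A w x i),
      ((SimpleGraph.fromRel A).induce (voronoiCell A w x i)).Reachable ⟨y, hy⟩ ⟨x i, hxi⟩ := by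
    intro y hy
    obtain ⟨l, hl, hlw⟩ := exists_isSPath_pathWeight_eq_ddist hy.1
    exact reachable_induce_of_isChain hl.1 (fun z hz => mem_voronoiCell_of_mem_geodesic hw hy hl hlw hz)
      hl.2.1 (List.mem_of_mem_getLast? hl.2.2.1)
  exact (SimpleGraph.connected_iff _).2
    ⟨fun ⟨a, ha⟩ ⟨b, hb⟩ => (hreach a ha).trans (hreach b hb).symm, ⟨⟨x i, hxi⟩⟩⟩

lemma exists_adj_voronoiCell [Finite V] [Finite ι] (hw : ∀ a b, A a b → 0 ≤ w a b)
    (hx : ∀ k, x k ∈ voronoiCell A w x k) (hij : i ≠ j) {r : ℝ}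
    (hball : ∀ k, ddist A w c (x k) ≤ r ↔ k = i ∨ k = j) :
    ∃ a ∈ voronoiCell A w x i, ∃ b ∈ voronoiCell A w x j, (SimpleGraph.fromRel A).Adj a b := by
  have hball' : ∀ k, ddist A w c (x k) ≤ r ↔ k = j ∨ k = i := fun k => (hball k).trans or_comm
  obtain ⟨li, hli, hwi⟩ := exists_isSPath_pathWeight_eq_ddist
    (ne_top_of_le_ne_top (EReal.coe_ne_top r) ((hball i).2 (.inl rfl)))
  obtain ⟨lj, hlj, hwj⟩ := exists_isSPath_pathWeight_eq_ddist
    (ne_top_of_le_ne_top (EReal.coe_ne_top r) ((hball j).2 (.inr rfl)))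
  rcases mem_voronoiCell_union_of_mem_geodesic hw hball hli hwi
    (List.mem_of_mem_head? hli.2.1) with hc | hc
  · exact exists_fromRel_adj_of_isChain (voronoiCell_disjoint hij) hlj.1
      (fun z hz => (mem_voronoiCell_union_of_mem_geodesic hw hball' hlj hwj hz).symm)
      hlj.2.1 hc (List.mem_of_mem_getLast? hlj.2.2.1) (hx j)
  · obtain ⟨b, hb, a, ha, hab⟩ := exists_fromRel_adj_of_isChain (voronoiCell_disjoint hij.symm)
      hli.1 (fun z hz => (mem_voronoiCell_union_of_mem_geodesic hw hball hli hwi hz).symm)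
      hli.2.1 hc (List.mem_of_mem_getLast? hli.2.2.1) (hx i)
    exact ⟨a, ha, b, hb, hab.symm⟩

end VoronoiCell

theorem hasCompleteMinor_of_forall_ball_eq_pair [Finite V] (hw : ∀ a b, A a b → 0 < w a b)
    {d : ℕ} {x : Fin d → V} (hx : Injective x)
    (hball : ∀ i j, i ≠ j → ∃ (c : V) (r : ℝ), ∀ k, ddist A w c (x k) ≤ r ↔ k = i ∨ k = j) :
    HasCompleteMinor (SimpleGraph.fromRel A) d := by
  have hw₀ : ∀ a b, A a b → 0 ≤ w a b := fun a b h => (hw a b h).le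
  have hxx := self_mem_voronoiCell hw hx
  refine ⟨voronoiCell A w x, fun i => ⟨x i, hxx i⟩, fun i => voronoiCell_connected hw₀ (hxx i),
    fun _ _ => voronoiCell_disjoint, fun i j hij => ?_⟩
  obtain ⟨c, r, hcr⟩ := hball i j hij
  exact exists_adj_voronoiCell hw₀ hxx hij hcr

lemma HasCompleteMinor.mono {G : SimpleGraph V} {d e : ℕ} (hde : e ≤ d)
    (h : HasCompleteMinor G d) : HasCompleteMinor G e := by
  obtain ⟨B, hne, hconn, hdisj, hadj⟩ := h
  have hinj := Fin.castLE_injective hde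
  exact ⟨B ∘ Fin.castLE hde, fun i => hne _, fun i => hconn _,
    fun i j hij => hdisj _ _ (hinj.ne hij), fun i j hij => hadj _ _ (hinj.ne hij)⟩

lemma vcdim_le {α : Type*} {F : Set (Set α)} {m : ℕ}
    (h : ∀ X : Finset α, VCShatters F X → X.card ≤ m) : VCdim F ≤ m :=
  csSup_le' fun _ ⟨X, hX, hsh⟩ => hX ▸ h X hsh

theorem hasCompleteMinor_of_vcShatters [Finite V] (hw : ∀ a b, A a b → 0 < w a b)
    {X : Finset V}
    (hX : VCShatters {S : Set V | ∃ (v : V) (r : ℝ), S = {u | ddist A w v u ≤ (r : EReal)}} X) :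
    HasCompleteMinor (SimpleGraph.fromRel A) X.card := by
  set x : Fin X.card → V := fun i => X.equivFin.symm i
  have hxX : ∀ k, x k ∈ X := fun k => (X.equivFin.symm k).2
  have hx : Injective x := Subtype.val_injective.comp X.equivFin.symm.injective
  refine hasCompleteMinor_of_forall_ball_eq_pair hw hx fun i j _ => ?_
  obtain ⟨_, ⟨c, r, rfl⟩, hS⟩ := hX {x i, x j} (Set.insert_subset (hxX i) (by simpa using hxX j))
  refine ⟨c, r, fun k => ?_⟩
  have hk : x k ∈ (X : Set V) ∩ {u | ddist A w c u ≤ r} ↔ x k ∈ ({x i, x j} : Set V) := by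
    rw [hS]
  simpa only [Set.mem_inter_iff, Finset.mem_coe, hxX k, true_and, Set.mem_ofPred_eq,
    Set.mem_insert_iff, Set.mem_singleton_iff, hx.eq_iff] using hk

end

/-- If `G` is a `K_h`-minor-free directed graph (with positive real edge weights),
then the set system of directed balls `B_G = {B(v,r) : v ∈ V, r ∈ ℝ}`, where
`B(v,r) = {u : d(v,u) ≤ r}`, has VC dimension at most `h − 1`. -/
theorem stmt_10 {V : Type*} [Fintype V] (A : V → V → Prop) (w : V → V → ℝ)
    (hw : ∀ a b, A a b → 0 < w a b) (h : ℕ)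
    (hminor : ¬ HasCompleteMinor (SimpleGraph.fromRel A) h) :
    VCdim {S : Set V | ∃ (v : V) (r : ℝ), S = {u | ddist A w v u ≤ (r : EReal)}}
      ≤ h - 1 := by
  refine vcdim_le fun X hX => ?_
  by_contra! hlt
  exact hminor ((hasCompleteMinor_of_vcShatters hw hX).mono (by omega))
end

section
/- If a weighted K_h-minor-free digraph G has bottleneck-ball set system B^β = {B^β(s,ρ) : s ∈ V, ρ ∈ ℝ}, where B^β(s,ρ) = {v : β_G(s,v) ≤ ρ} and β_G is the bottleneck distance, then VCdim(B^β) ≤ h − 1, assuming every family of ordinary distance balls in a K_h-minor-free digraph has VC dimension at most h − 1. -/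
/-- Bottleneck distance: the minimum over `u → v` paths of the maximum edge weight
on the path, valued in `EReal` (`⊤` when unreachable). -/
noncomputable def bdist {V : Type*} (A : V → V → Prop) (w : V → V → ℝ) (u v : V) : EReal :=
  sInf {x : EReal | ∃ l, IsSPath A u v l ∧
    x = ((l.zip l.tail).map fun p => (w p.1 p.2 : EReal)).foldr max ⊥}

/-!
Replace each edge weight `w e` by `(n + 1) ^ k`, where `n = |V|` and `k` is the number of ordered
pairs of vertices whose weight is at most `w e`. A simple path has at most `n` edges, so if all its
edges have rank at most `k` its new length is at most `n (n + 1) ^ k`, while a single edge of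
larger rank already weighs `(n + 1) ^ (k + 1) > n (n + 1) ^ k`. Hence every bottleneck ball is an
ordinary ball for the new weights, and VC dimension is monotone under passing to a subfamily.
-/

open Finset

theorem List.foldr_max_bot_le_iff {α : Type*} [LinearOrder α] [OrderBot α] {l : List α}
    {a : α} : l.foldr max ⊥ ≤ a ↔ ∀ x ∈ l, x ≤ a :=
  ⟨fun h _ hx => (List.le_max_of_le hx le_rfl).trans h, List.max_le_of_forall_le l a⟩

theorem sInf_setOf_eq_le_iff {ι α : Type*} [CompleteLinearOrder α] {P : ι → Prop}
    (hP : {i | P i}.Finite) (f : ι → α) {a : α} (ha : a ≠ ⊤) :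
    sInf {x | ∃ i, P i ∧ x = f i} ≤ a ↔ ∃ i, P i ∧ f i ≤ a := by
  have himage : {x | ∃ i, P i ∧ x = f i} = f '' {i | P i} := by
    ext x
    simp [eq_comm]
  rw [himage]
  refine ⟨fun h => ?_, fun ⟨i, hi, hfi⟩ => (sInf_le (Set.mem_image_of_mem f hi)).trans hfi⟩
  obtain hempty | hne := (f '' {i | P i}).eq_empty_or_nonempty
  · rw [hempty, sInf_empty, top_le_iff] at h
    exact absurd h ha
  · obtain ⟨i, hi, hfi⟩ := hne.csInf_mem (hP.image f)
    exact ⟨i, hi, hfi ▸ h⟩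

theorem List.forall_le_iff_sum_map_pow_le {R : Type*} [Semiring R] [LinearOrder R]
    [IsStrictOrderedRing R] {n m : ℕ} {L : List ℕ} (hL : L.length ≤ n) :
    (∀ k ∈ L, k ≤ m) ↔ (L.map fun k => ((n : R) + 1) ^ k).sum ≤ n * ((n : R) + 1) ^ m := by
  have hbase : (1 : R) ≤ n + 1 := le_add_of_nonneg_left n.cast_nonneg
  constructor
  · intro hle
    calc (L.map fun k => ((n : R) + 1) ^ k).sum
        ≤ L.length • ((n : R) + 1) ^ m := by
          simpa using List.sum_le_card_nsmul _ _
            (List.forall_mem_map.2 fun k hk => pow_le_pow_right₀ hbase (hle k hk))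
      _ ≤ n * ((n : R) + 1) ^ m := by
          rw [nsmul_eq_mul]
          gcongr
  · intro hsum k hk
    by_contra! hmk
    have hterm : ((n : R) + 1) ^ k ≤ (L.map fun k => ((n : R) + 1) ^ k).sum :=
      List.single_le_sum (List.forall_mem_map.2 fun _ _ => by positivity) _ (List.mem_map_of_mem hk)
    have hgap : (n : R) * (n + 1) ^ m < (n + 1) ^ k :=
      calc (n : R) * (n + 1) ^ m < (n + 1) * (n + 1) ^ m := by gcongr; exact lt_add_one _
        _ = (n + 1) ^ (m + 1) := (pow_succ' _ _).symm
        _ ≤ (n + 1) ^ k := pow_le_pow_right₀ hbase hmk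
    exact (hgap.trans_le hterm).not_ge hsum

theorem VCShatters.mono {α : Type*} {F G : Set (Set α)} {A : Set α} (hFG : F ⊆ G)
    (hF : VCShatters F A) : VCShatters G A := fun B hB =>
  let ⟨S, hS, hAS⟩ := hF B hB
  ⟨S, hFG hS, hAS⟩

theorem VCdim_mono {α : Type*} [Finite α] {F G : Set (Set α)} (hFG : F ⊆ G) :
    VCdim F ≤ VCdim G := by
  have : Fintype α := Fintype.ofFinite α
  unfold VCdim
  refine csSup_le_csSup' ⟨Fintype.card α, ?_⟩ ?_
  · rintro d ⟨A, rfl, -⟩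
    exact A.card_le_univ
  · rintro d ⟨A, hA, hF⟩
    exact ⟨A, hA, hF.mono hFG⟩

section SimplePaths

variable {V : Type*} [Fintype V]

theorem IsSPath.length_le_card {A : V → V → Prop} {u v : V} {l : List V}
    (hl : IsSPath A u v l) : l.length ≤ Fintype.card V :=
  hl.2.2.2.length_le_card

variable (A : V → V → Prop)

theorem finite_setOf_isSPath (u v : V) : {l | IsSPath A u v l}.Finite :=
  (List.finite_length_le V (Fintype.card V)).subset fun _ hl => IsSPath.length_le_card hl

theorem ddist_le_coe_iff (w : V → V → ℝ) (u v : V) (r : ℝ) :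
    ddist A w u v ≤ r ↔ ∃ l, IsSPath A u v l ∧ pathWeight w l ≤ r := by
  rw [ddist, sInf_setOf_eq_le_iff (finite_setOf_isSPath A u v) _ (EReal.coe_ne_top r)]
  simp only [EReal.coe_le_coe_iff]

theorem bdist_le_coe_iff (w : V → V → ℝ) (u v : V) (ρ : ℝ) :
    bdist A w u v ≤ ρ ↔ ∃ l, IsSPath A u v l ∧ ∀ p ∈ l.zip l.tail, w p.1 p.2 ≤ ρ := by
  rw [bdist, sInf_setOf_eq_le_iff (finite_setOf_isSPath A u v) _ (EReal.coe_ne_top ρ)]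
  simp only [List.foldr_max_bot_le_iff, List.forall_mem_map, EReal.coe_le_coe_iff]

end SimplePaths

section Reweighting

variable {V : Type*} [Fintype V] (w : V → V → ℝ)

open Classical in
noncomputable def weightRank (x : ℝ) : ℕ :=
  #{p : V × V | w p.1 p.2 ≤ x}

noncomputable def rankWeight (u v : V) : ℝ :=
  ((Fintype.card V : ℝ) + 1) ^ weightRank w (w u v)

theorem weightRank_mono : Monotone (weightRank w) := by
  classical
  exact fun _ _ hxy => card_le_card <| monotone_filter_right _ fun _ _ hp => hp.trans hxy

theorem weightRank_lt_weightRank {u v : V} {x : ℝ} (hx : x < w u v) :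
    weightRank w x < weightRank w (w u v) := by
  classical
  refine card_lt_card ((ssubset_iff_of_subset ?_).2 ⟨(u, v), by simp, by simp [hx]⟩)
  exact monotone_filter_right _ fun _ _ hp => hp.trans hx.le

theorem weightRank_le_weightRank_iff {u v : V} {x : ℝ} :
    weightRank w (w u v) ≤ weightRank w x ↔ w u v ≤ x :=
  ⟨fun hle => le_of_not_gt fun hlt => hle.not_gt (weightRank_lt_weightRank w hlt),
    fun hle => weightRank_mono w hle⟩

theorem bdist_le_coe_iff_ddist_rankWeight_le (A : V → V → Prop) (u v : V) (ρ : ℝ) :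
    bdist A w u v ≤ ρ ↔ ddist A (rankWeight w) u v ≤
      ((Fintype.card V * ((Fintype.card V : ℝ) + 1) ^ weightRank w ρ : ℝ) : EReal) := by
  rw [bdist_le_coe_iff, ddist_le_coe_iff]
  refine exists_congr fun l => and_congr_right fun hl => ?_
  have hlen : ((l.zip l.tail).map fun p => weightRank w (w p.1 p.2)).length ≤
      Fintype.card V := by
    simp only [List.length_map, List.length_zip]
    exact (min_le_left _ _).trans hl.length_le_card
  have key := List.forall_le_iff_sum_map_pow_le (R := ℝ) (m := weightRank w ρ) hlen
  rw [List.map_map, List.forall_mem_map] at key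
  simpa [weightRank_le_weightRank_iff, pathWeight, rankWeight, Function.comp_def] using key

end Reweighting

theorem stmt_11_general {V : Type*} [Fintype V] (A : V → V → Prop) (w : V → V → ℝ) (h : ℕ)
    (hballs : ∀ w' : V → V → ℝ,
      VCdim {S : Set V | ∃ (s : V) (r : ℝ), S = {v | ddist A w' s v ≤ (r : EReal)}}
        ≤ h - 1) :
    VCdim {S : Set V | ∃ (s : V) (ρ : ℝ), S = {v | bdist A w s v ≤ (ρ : EReal)}}
      ≤ h - 1 := by
  refine (VCdim_mono ?_).trans (hballs (rankWeight w))
  rintro S ⟨s, ρ, rfl⟩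
  exact ⟨s, _, Set.ext fun v => bdist_le_coe_iff_ddist_rankWeight_le w A s v ρ⟩

/-- If a weighted `K_h`-minor-free digraph `G` has bottleneck-ball set system
`B^β = {B^β(s,ρ) : s ∈ V, ρ ∈ ℝ}` with `B^β(s,ρ) = {v : β_G(s,v) ≤ ρ}`, then
`VCdim(B^β) ≤ h − 1`, assuming (as a hypothesis) that for every choice of real edge
weights on the same `K_h`-minor-free digraph, the family of ordinary distance balls
has VC dimension at most `h − 1`. -/
theorem stmt_11 {V : Type*} [Fintype V] (A : V → V → Prop) (w : V → V → ℝ) (h : ℕ)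
    (hminor : ¬ HasCompleteMinor (SimpleGraph.fromRel A) h)
    (hballs : ∀ w' : V → V → ℝ,
      VCdim {S : Set V | ∃ (s : V) (r : ℝ), S = {v | ddist A w' s v ≤ (r : EReal)}}
        ≤ h - 1) :
    VCdim {S : Set V | ∃ (s : V) (ρ : ℝ), S = {v | bdist A w s v ≤ (ρ : EReal)}}
      ≤ h - 1 :=
  stmt_11_general A w h hballs
end

section
/- Let G be unweighted, P a piece with boundary vertices b_1,...,b_k sorted so that d(u,b_1) ≤ ... ≤ d(u,b_k) for a fixed u ∉ V(P), and let v ∈ V(P)\∂P. Let j be the largest index such that v ∉ B(u, d(u,b_j)). Then d_G(u,v) = d_G(u,b_j) + d_P(B(u, d_G(u,b_j)) ∩ V(P), v), where d_P(S,v) = min over y ∈ S of d_P(y,v). -/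
/-!
Every `y` of the ball–piece intersection is reached from `u` within `d(u, b_j)` steps, so
`d(u, v) ≤ d(u, b_j) + d_P(y, v)`. For `≥`, take the boundary vertex `b_i` through which a shortest
`u`–`v` path enters `P`. Since `v ≠ b_i`, `d(u, b_i) < d(u, v)`, so `i ≤ j` by maximality of `j`,
and the vertex `z` at distance `d(u, b_j) - d(u, b_i)` from `b_i` on a shortest `b_i`–`v` path in `P`
lies in the ball and splits `d(u, v)` as `d(u, b_j) + d_P(z, v)`.
-/

section PieceDistances

variable {V ι : Type*} {VP : Set V} {b : ι → V} {d : V → ℕ∞} {dP : V → V → ℕ∞}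

theorem le_add_of_iInf_boundary (hdec : ∀ x ∈ VP, d x = ⨅ i, d (b i) + dP (b i) x)
    (htri : ∀ x y z, dP x z ≤ dP x y + dP y z) {x y : V} (hx : x ∈ VP) (hy : y ∈ VP) :
    d x ≤ d y + dP y x := by
  rw [hdec x hx, hdec y hy, ENat.iInf_add]
  refine iInf_mono fun i => ?_
  rw [add_assoc]
  gcongr
  exact htri _ y x

theorem exists_boundary_add_eq [Nonempty ι] (hdec : ∀ x ∈ VP, d x = ⨅ i, d (b i) + dP (b i) x)
    {v : V} (hv : v ∈ VP) : ∃ i, d (b i) + dP (b i) v = d v := by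
  obtain ⟨i, hi⟩ := ciInf_mem fun i => d (b i) + dP (b i) v
  exact ⟨i, hi.trans (hdec v hv).symm⟩

theorem exists_mem_add_eq_of_le_of_le (hdec : ∀ x ∈ VP, d x = ⨅ i, d (b i) + dP (b i) x)
    (htri : ∀ x y z, dP x z ≤ dP x y + dP y z)
    (hmid : ∀ x ∈ VP, ∀ y ∈ VP, dP x y ≠ ⊤ →
      ∀ q ≤ dP x y, ∃ z ∈ VP, dP x z = q ∧ dP z y = dP x y - q)
    {x v : V} {D : ℕ∞} (hx : x ∈ VP) (hv : v ∈ VP) (hxv : d x + dP x v = d v)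
    (hfin : d v ≠ ⊤) (hxD : d x ≤ D) (hDv : D ≤ d v) :
    ∃ z ∈ VP, d z ≤ D ∧ D + dP z v = d v := by
  have hPfin : dP x v ≠ ⊤ := fun h => hfin (by rw [← hxv, h, add_top])
  have hq : D - d x ≤ dP x v := by rwa [tsub_le_iff_left, hxv]
  have hxq : d x + (D - d x) = D := add_tsub_cancel_of_le hxD
  obtain ⟨z, hz, hxz, hzv⟩ := hmid x hx v hv hPfin _ hq
  refine ⟨z, hz, ?_, ?_⟩
  · calc d z ≤ d x + dP x z := le_add_of_iInf_boundary hdec htri hz hx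
      _ = D := by rw [hxz, hxq]
  · rw [hzv]
    nth_rw 1 [← hxq]
    rw [add_assoc, add_tsub_cancel_of_le hq, hxv]

end PieceDistances

theorem stmt_13_general {V : Type*} (VP : Set V) (k : ℕ) (hk : 0 < k) (b : Fin k → V)
    (dG dP : V → V → ℕ∞) (u v : V)
    (hv : v ∈ VP) (hv' : ∀ i, v ≠ b i)
    (hbVP : ∀ i, b i ∈ VP)
    (hsort : Monotone fun i => dG u (b i))
    (hdec : ∀ x ∈ VP, dG u x = ⨅ i : Fin k, (dG u (b i) + dP (b i) x))
    (htri : ∀ x y z, dP x z ≤ dP x y + dP y z)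
    (hpos : ∀ x y : V, x ≠ y → 1 ≤ dP x y)
    (hmid : ∀ x ∈ VP, ∀ y ∈ VP, dP x y ≠ ⊤ →
      ∀ q ≤ dP x y, ∃ z ∈ VP, dP x z = q ∧ dP z y = dP x y - q)
    (j : Fin k)
    (hj1 : dG u (b j) < dG u v)
    (hj2 : ∀ i, dG u (b i) < dG u v → i ≤ j) :
    dG u v = dG u (b j) + ⨅ y ∈ {x ∈ VP | dG u x ≤ dG u (b j)}, dP y v := by
  have : Nonempty (Fin k) := Fin.pos_iff_nonempty.mp hk
  refine le_antisymm ?_ ?_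
  · rw [ENat.add_iInf₂]
    exact le_iInf₂ fun y ⟨hy, hyD⟩ =>
      (le_add_of_iInf_boundary hdec htri hv hy).trans (by gcongr)
  rcases eq_or_ne (dG u v) ⊤ with htop | hfin
  · simp [htop]
  obtain ⟨i, hi⟩ := exists_boundary_add_eq hdec hv
  have hifin : dG u (b i) ≠ ⊤ := ne_top_of_le_ne_top hfin (hi ▸ le_self_add)
  have hiv : dG u (b i) < dG u v := by
    rw [← ENat.add_one_le_iff hifin, ← hi]
    gcongr
    exact hpos _ _ (hv' i).symm
  obtain ⟨z, hz, hzD, hzv⟩ := exists_mem_add_eq_of_le_of_le hdec htri hmid (hbVP i) hv hi hfin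
    (hsort (hj2 i hiv)) hj1.le
  rw [← hzv]
  gcongr
  exact iInf₂_le z ⟨hz, hzD⟩

/-- Distance-query formula for the unweighted distance oracle: `G` is an unweighted
digraph with distances `dG` (valued in `ℕ∞`), `P` a piece with vertex set `VP`,
boundary vertices `b 0, …, b (k−1)` (sorted nondecreasingly by distance from `u`),
and internal distances `dP`; `u ∉ VP`, `v ∈ VP \ ∂P`.  The hypotheses record that
`dP` is an (unweighted) graph metric on `P` (triangle inequality, positivity on
distinct vertices, and existence of intermediate vertices on shortest paths) and
that distances from `u` into the piece decompose through the boundary.  If `j` is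
the largest index with `v ∉ B(u, dG u (b j))`, then
`dG u v = dG u (b j) + dP(B(u, dG u (b j)) ∩ VP, v)`, where the last term is the
minimum over `y` in the ball-piece intersection of `dP y v`. -/
theorem stmt_13 {V : Type*} (VP : Set V) (k : ℕ) (hk : 0 < k) (b : Fin k → V)
    (dG dP : V → V → ℕ∞) (u v : V)
    (hu : u ∉ VP) (hv : v ∈ VP) (hv' : ∀ i, v ≠ b i)
    (hbVP : ∀ i, b i ∈ VP)
    (hsort : Monotone fun i => dG u (b i))
    (hdec : ∀ x ∈ VP, dG u x = ⨅ i : Fin k, (dG u (b i) + dP (b i) x))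
    (htri : ∀ x y z, dP x z ≤ dP x y + dP y z)
    (hpos : ∀ x y : V, x ≠ y → 1 ≤ dP x y)
    (hmid : ∀ x ∈ VP, ∀ y ∈ VP, dP x y ≠ ⊤ →
      ∀ q ≤ dP x y, ∃ z ∈ VP, dP x z = q ∧ dP z y = dP x y - q)
    (j : Fin k)
    (hj1 : dG u (b j) < dG u v)
    (hj2 : ∀ i, dG u (b i) < dG u v → i ≤ j) :
    dG u v = dG u (b j) + ⨅ y ∈ {x ∈ VP | dG u x ≤ dG u (b j)}, dP y v :=
  stmt_13_general VP k hk b dG dP u v hv hv' hbVP hsort hdec htri hpos hmid j hj1 hj2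
end

section
/- Let v_1,...,v_d be vertices witnessing pseudodimension d of the multiball family: there exist thresholds y_1,...,y_d such that for every pair {i,j} there are t_{ij} and minimal r_{ij} with d(t_{ij},v_k) ≤ r_{ij}+δ_{y_k} for k ∈ {i,j} and d(t_{ij},v_k) > r_{ij}+δ_{y_k} otherwise. Then for distinct i,j,p, if x lies on a shortest path from t_{ij} to v_i and on a shortest path from t_{jp} to v_j (with x ≠ t_{ij}), letting r_x = r_{ij} − d(t_{ij},x) < r_{ij}, the pair (x, r_x) satisfies d(x,v_k) ≤ r_x + δ_{y_k} for k ∈ {i,j} and d(x,v_k) > r_x + δ_{y_k} for k ∉ {i,j}, contradicting minimality of r_{ij}; hence V(π(t_{ij},v_i)) ∩ V(π(t_{jp},v_j)) ⊆ {t_{ij}}. -/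
/-!
Moving the centre `tij` a distance `d tij x` along a shortest path towards `v i`, and shrinking
the radius by the same amount, keeps `v i` inside the shifted ball and, by the triangle
inequality, every `v k` with `k ∉ {i, j}` outside. The vertex `v j` stays inside as well:
`x` lies on a shortest path from `tjp` to `v j`, and `v i` lies outside the ball of `tjp`.
So `x ≠ tij` would produce a strictly smaller admissible radius than `rij`.
-/

section ShiftedBalls

variable {V : Type*} (d : V → V → ℝ)

theorem sub_dist_add_lt_dist_of_add_lt_dist (htri : ∀ a b c, d a c ≤ d a b + d b c)
    {t x w : V} {r a : ℝ} (hw : r + a < d t w) : r - d t x + a < d x w := by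
  linarith [htri t x w]

theorem dist_le_sub_dist_add_of_geodesic {t x w : V} {r a : ℝ}
    (hx : d t x + d x w = d t w) (hw : d t w ≤ r + a) : d x w ≤ r - d t x + a := by
  linarith

theorem dist_lt_sub_dist_add_of_geodesic_of_geodesic (htri : ∀ a b c, d a c ≤ d a b + d b c)
    {t t' x w w' : V} {r r' a b : ℝ}
    (hx : d t x + d x w = d t w) (hx' : d t' x + d x w' = d t' w')
    (hw : d t w ≤ r + a) (hw' : d t' w' ≤ r' + b) (hw_out : r' + a < d t' w) :
    d x w' < r - d t x + b := by
  linarith [htri t' x w]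

end ShiftedBalls

theorem stmt_18_general {V : Type*} {m : ℕ} (d : V → V → ℝ)
    (htri : ∀ a b c, d a c ≤ d a b + d b c)
    (hpos : ∀ a b : V, a ≠ b → 0 < d a b)
    (v : Fin m → V) (c : Fin m → ℝ)
    (i j p : Fin m) (hij : i ≠ j) (hip : i ≠ p)
    (tij tjp : V) (rij rjp : ℝ)
    (h1 : ∀ k, (k = i ∨ k = j) → d tij (v k) ≤ rij + c k)
    (h2 : ∀ k, k ≠ i → k ≠ j → rij + c k < d tij (v k))
    (h3 : ∀ k, (k = j ∨ k = p) → d tjp (v k) ≤ rjp + c k)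
    (h4 : ∀ k, k ≠ j → k ≠ p → rjp + c k < d tjp (v k))
    (hmin : ∀ (t' : V) (r' : ℝ),
      (∀ k, (k = i ∨ k = j) → d t' (v k) ≤ r' + c k) →
      (∀ k, k ≠ i → k ≠ j → r' + c k < d t' (v k)) → rij ≤ r') :
    ∀ x : V, d tij x + d x (v i) = d tij (v i) →
      d tjp x + d x (v j) = d tjp (v j) → x = tij := by
  intro x hxi hxj
  by_contra hx
  have hinside : ∀ k, (k = i ∨ k = j) → d x (v k) ≤ rij - d tij x + c k := by
    rintro k (rfl | rfl)
    · exact dist_le_sub_dist_add_of_geodesic d hxi (h1 k (Or.inl rfl))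
    · exact (dist_lt_sub_dist_add_of_geodesic_of_geodesic d htri hxi hxj (h1 i (Or.inl rfl))
        (h3 k (Or.inl rfl)) (h4 i hij hip)).le
  have houtside : ∀ k, k ≠ i → k ≠ j → rij - d tij x + c k < d x (v k) := fun k hki hkj =>
    sub_dist_add_lt_dist_of_add_lt_dist d htri (h2 k hki hkj)
  linarith [hmin x _ hinside houtside, hpos _ _ (Ne.symm hx)]

/-- Claim 3 of the pseudodimension lower-bound-to-minor argument.  `d` is the
shortest-path distance of a digraph with strictly positive edge weights (so `d`
satisfies the triangle inequality, `d a a = 0`, and `d a b > 0` for `a ≠ b`).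
Vertices `v 1, …, v m` and shift values `c k = δ_{y_k}` witness pseudodimension:
for the pair `{i,j}` there are `tij` and a minimal radius `rij` with
`d tij (v k) ≤ rij + c k` for `k ∈ {i,j}` and `d tij (v k) > rij + c k` otherwise,
and similarly `tjp, rjp` for the pair `{j,p}`.  Then any vertex `x` lying both on a
shortest path from `tij` to `v i` and on a shortest path from `tjp` to `v j` must
equal `tij` (otherwise `(x, rij − d tij x)` would contradict the minimality of
`rij`). -/
theorem stmt_18 {V : Type*} {m : ℕ} (d : V → V → ℝ)
    (htri : ∀ a b c, d a c ≤ d a b + d b c)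
    (hrefl : ∀ a, d a a = 0)
    (hpos : ∀ a b : V, a ≠ b → 0 < d a b)
    (v : Fin m → V) (c : Fin m → ℝ)
    (i j p : Fin m) (hij : i ≠ j) (hip : i ≠ p) (hjp : j ≠ p)
    (tij tjp : V) (rij rjp : ℝ)
    (h1 : ∀ k, (k = i ∨ k = j) → d tij (v k) ≤ rij + c k)
    (h2 : ∀ k, k ≠ i → k ≠ j → rij + c k < d tij (v k))
    (h3 : ∀ k, (k = j ∨ k = p) → d tjp (v k) ≤ rjp + c k)
    (h4 : ∀ k, k ≠ j → k ≠ p → rjp + c k < d tjp (v k))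
    (hmin : ∀ (t' : V) (r' : ℝ),
      (∀ k, (k = i ∨ k = j) → d t' (v k) ≤ r' + c k) →
      (∀ k, k ≠ i → k ≠ j → r' + c k < d t' (v k)) → rij ≤ r') :
    ∀ x : V, d tij x + d x (v i) = d tij (v i) →
      d tjp x + d x (v j) = d tjp (v j) → x = tij :=
  stmt_18_general d htri hpos v c i j p hij hip tij tjp rij rjp h1 h2 h3 h4 hmin
end

section
/- Suppose for indices i ≤ s ≤ j (boundary vertices b_1,...,b_k of piece P sorted by distance from u ∉ V(P)) we have d_G(u,b_i) > d_G(u,b_s) − r for the minimal such i, and d_G(u,b_j) < d_G(u,b_s) + r for the maximal such j, and assume every simple path inside P has length < r. Then for every l with s ≤ l ≤ j and every v ∈ V(P): v ∈ B(u, d_G(u,b_l)) if and only if either v is reachable in P from {b_1,...,b_{i−1}}, or there exists t ∈ {i,...,j} with (d_G(u,b_t) − d_G(u,b_s)) + d_P(b_t,v) ≤ d_G(u,b_l) − d_G(u,b_s). -/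
/-! Since `d_G(u, v)` is a minimum over the finitely many boundary vertices, `v` lies in the ball
of radius `d_G(u, b_l)` iff some single term `d_G(u, b_t) + d_P(b_t, v)` is at most that radius.
Such a `t` can never lie beyond the window end `j`, because `d_G(u, b_t) ≥ d_G(u, b_s) + r` would
already exceed the radius. Conversely, an index `t` before the window start `i` satisfies
`d_G(u, b_t) + r ≤ d_G(u, b_s)`, so as `d_P` is below `r` whenever finite, every vertex reachable
from `b_t` inside `P` lies in the ball. -/

theorem iInf_le_iff_exists_le {ι α : Type*} [CompleteLinearOrder α] [Nonempty ι] [Finite ι]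
    {f : ι → α} {a : α} : ⨅ t, f t ≤ a ↔ ∃ t, f t ≤ a := by
  refine ⟨fun h => ?_, fun ⟨t, ht⟩ => (iInf_le f t).trans ht⟩
  obtain ⟨t, ht⟩ := exists_eq_ciInf_of_finite (f := f)
  exact ⟨t, ht ▸ h⟩

section Window

variable {ι : Type*} [LinearOrder ι] {w : ι → ℕ∞} {ρ x : ℕ∞} {s i j t l : ι}

theorem add_le_of_lt_windowStart (hi : ∀ i', w s < w i' + ρ → i ≤ i') (ht : t < i) :
    w t + ρ ≤ w s :=
  not_lt.1 fun h => (hi t h).not_gt ht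

theorem le_windowEnd_of_add_le (hw : Monotone w) (hj : ∀ j', w j' < w s + ρ → j' ≤ j)
    (hjs : w j < w s + ρ) (hlj : l ≤ j) (ht : w t + x ≤ w l) : t ≤ j :=
  hj t ((le_self_add.trans ht).trans (hw hlj) |>.trans_lt hjs)

theorem ne_top_of_add_le_windowEnd (hw : Monotone w) (hjs : w j < w s + ρ) (hlj : l ≤ j)
    (ht : w t + x ≤ w l) : x ≠ ⊤ :=
  (WithTop.add_ne_top.1 (ne_top_of_le_ne_top ((hw hlj).trans_lt hjs).ne_top ht)).2

end Window

theorem stmt_19_general {V : Type*} (VP : Set V) (k r : ℕ)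
    (b : Fin k → V) (hbVP : ∀ i, b i ∈ VP)
    (dG dP : V → V → ℕ∞) (u : V)
    (hsort : Monotone fun i => dG u (b i))
    (hdec : ∀ x ∈ VP, dG u x = ⨅ t : Fin k, (dG u (b t) + dP (b t) x))
    (hdiam : ∀ x ∈ VP, ∀ y ∈ VP, dP x y ≠ ⊤ → dP x y < (r : ℕ∞))
    (s i j : Fin k)
    (hi2 : ∀ i', dG u (b s) < dG u (b i') + (r : ℕ∞) → i ≤ i')
    (hj1 : dG u (b j) < dG u (b s) + (r : ℕ∞))
    (hj2 : ∀ j', dG u (b j') < dG u (b s) + (r : ℕ∞) → j' ≤ j) :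
    ∀ l : Fin k, s ≤ l → l ≤ j → ∀ v ∈ VP,
      (dG u v ≤ dG u (b l) ↔
        ((∃ i' : Fin k, i' < i ∧ dP (b i') v ≠ ⊤) ∨
          ∃ t : Fin k, i ≤ t ∧ t ≤ j ∧ dG u (b t) + dP (b t) v ≤ dG u (b l))) := by
  intro l hsl hlj v hv
  have : Nonempty (Fin k) := ⟨s⟩
  rw [hdec v hv, iInf_le_iff_exists_le]
  constructor
  · rintro ⟨t, ht⟩
    rcases lt_or_ge t i with hti | hit
    · exact .inl ⟨t, hti, ne_top_of_add_le_windowEnd hsort hj1 hlj ht⟩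
    · exact .inr ⟨t, hit, le_windowEnd_of_add_le hsort hj2 hj1 hlj ht, ht⟩
  · rintro (⟨t, hti, hfin⟩ | ⟨t, -, -, ht⟩)
    · refine ⟨t, ?_⟩
      calc dG u (b t) + dP (b t) v ≤ dG u (b t) + r := by
            gcongr; exact (hdiam _ (hbVP t) _ hv hfin).le
        _ ≤ dG u (b s) := add_le_of_lt_windowStart (w := fun t => dG u (b t)) hi2 hti
        _ ≤ dG u (b l) := hsort hsl
    · exact ⟨t, ht⟩

/-- Interval-ball-unique lemma: `G` is an unweighted digraph with distances
`dG : ℕ∞`, `P` a piece with vertex set `VP`, internal distances `dP` (with every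
finite distance inside `P` strictly below `r`), and boundary vertices
`b 0, …, b (k−1)` sorted nondecreasingly by distance from `u ∉ VP`; distances from
`u` into the piece decompose through the boundary.  Let `i` be minimal with
`dG u (b i) > dG u (b s) − r` (additively: `dG u (b s) < dG u (b i) + r`) and `j`
maximal with `dG u (b j) < dG u (b s) + r`.  Then for every `l` with `s ≤ l ≤ j`
and every `v ∈ VP`: `v ∈ B(u, dG u (b l))` iff either `v` is reachable in `P` from
`{b 0, …, b (i−1)}`, or there is `t ∈ {i,…,j}` with
`(dG u (b t) − dG u (b s)) + dP (b t) v ≤ dG u (b l) − dG u (b s)` (stated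
additively as `dG u (b t) + dP (b t) v ≤ dG u (b l)`). -/
theorem stmt_19 {V : Type*} (VP : Set V) (k r : ℕ) (hr : 0 < r)
    (b : Fin k → V) (hbVP : ∀ i, b i ∈ VP)
    (dG dP : V → V → ℕ∞) (u : V) (hu : u ∉ VP)
    (hsort : Monotone fun i => dG u (b i))
    (hdec : ∀ x ∈ VP, dG u x = ⨅ t : Fin k, (dG u (b t) + dP (b t) x))
    (hdiam : ∀ x ∈ VP, ∀ y ∈ VP, dP x y ≠ ⊤ → dP x y < (r : ℕ∞))
    (s i j : Fin k)
    (hi1 : dG u (b s) < dG u (b i) + (r : ℕ∞))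
    (hi2 : ∀ i', dG u (b s) < dG u (b i') + (r : ℕ∞) → i ≤ i')
    (hj1 : dG u (b j) < dG u (b s) + (r : ℕ∞))
    (hj2 : ∀ j', dG u (b j') < dG u (b s) + (r : ℕ∞) → j' ≤ j) :
    ∀ l : Fin k, s ≤ l → l ≤ j → ∀ v ∈ VP,
      (dG u v ≤ dG u (b l) ↔
        ((∃ i' : Fin k, i' < i ∧ dP (b i') v ≠ ⊤) ∨
          ∃ t : Fin k, i ≤ t ∧ t ≤ j ∧ dG u (b t) + dP (b t) v ≤ dG u (b l))) :=
  stmt_19_general VP k r b hbVP dG dP u hsort hdec hdiam s i j hi2 hj1 hj2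
end
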